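/- (End-component lemma) For every MDP M = (Q, E, δ), every state q ∈ Q, and every strategy σ, the set of plays ρ such that Inf(ρ) is an end-component of M has P_q^σ-probability 1. -/

import Mathlib

/-!
Almost surely every step of the play follows an edge; since `Q` is finite, the play eventually
stays inside `Inf(ρ)`, so `Inf(ρ)` is nonempty, strongly connected and every state in it has a
successor in it. For closure under `δ`, note that after a probabilistic state `a` the next state
is drawn from `δ a` whatever the history was. Hence the probability that the first `k` visits to
`a` after time `m` are none of them followed by `b` is at most `(1 - δ a b) ^ k`. Letting `k → ∞`,
if `δ a b > 0` and `a` is visited infinitely often, then almost surely so is `b`.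
-/

open MeasureTheory Filter
open scoped Classical ENNReal

namespace MPP

/-- A Markov decision process: states `Q`, player-1 states `Q1` (the rest are
probabilistic), edge relation `E` with every state having a successor, and a
probabilistic transition function `δ` whose support at every probabilistic state
is exactly the set of successors. -/
structure MDP (Q : Type) where
  Q1 : Set Q
  E : Q → Q → Prop
  E_nonempty : ∀ q, ∃ q', E q q'
  δ : Q → PMF Q
  δ_support : ∀ q, q ∉ Q1 → ∀ q', q' ∈ (δ q).support ↔ E q q'

/-- A strategy: given the history `h` (the states strictly before the current one)
and the current state `q`, if `q` is a player-1 state it selects a distribution on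
successors of `q`. -/
structure Strategy {Q : Type} (M : MDP Q) where
  act : List Q → Q → PMF Q
  act_support : ∀ h q, q ∈ M.Q1 → ∀ q', q' ∈ (act h q).support → M.E q q'

variable {Q : Type}

/-- One step of the history-dependent transition kernel. -/
noncomputable def MDP.step (M : MDP Q) (σ : Strategy M) (h : List Q) (q : Q) : PMF Q :=
  if q ∈ M.Q1 then σ.act h q else M.δ q

/-- Probability of traversing the finite sequence `future` starting at `q` with
past history `h`. -/
noncomputable def pathProb (M : MDP Q) (σ : Strategy M) : List Q → Q → List Q → ℝ≥0∞
  | _, _, [] => 1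
  | h, q, q' :: rest => M.step σ h q q' * pathProb M σ (h ++ [q]) q' rest

/-- `μ` is the trajectory measure (Ionescu–Tulcea) on plays of `M` under strategy
`σ`, starting at `q`: it is the (unique) probability measure on `ℕ → Q` (product
σ-algebra) giving every cylinder its product probability. -/
def IsTrajMeasure [MeasurableSpace Q] (M : MDP Q) (σ : Strategy M) (q : Q)
    (μ : Measure (ℕ → Q)) : Prop :=
  IsProbabilityMeasure μ ∧
    ∀ (n : ℕ) (f : ℕ → Q),
      μ {ρ | ∀ i ≤ n, ρ i = f i} =
        if f 0 = q then pathProb M σ [] q ((List.range n).map fun i => f (i + 1)) else 0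

/-- The set of states occurring infinitely often in a play. -/
def infSet (ρ : ℕ → Q) : Set Q := {s | ∀ N, ∃ n, N ≤ n ∧ ρ n = s}

/-- End-component: nonempty, closed under probabilistic transitions, every state has
a successor inside, and strongly connected inside. -/
def MDP.IsEndComponent (M : MDP Q) (U : Set Q) : Prop :=
  U.Nonempty ∧
    (∀ q ∈ U, q ∉ M.Q1 → (M.δ q).support ⊆ U) ∧
    (∀ q ∈ U, ∃ q' ∈ U, M.E q q') ∧
    ∀ q ∈ U, ∀ q' ∈ U, Relation.ReflTransGen (fun a b => a ∈ U ∧ b ∈ U ∧ M.E a b) q q'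

/-- Energy level of the length-`n` prefix of a play. -/
def EL (w : Q → Q → ℤ) (ρ : ℕ → Q) (n : ℕ) : ℤ :=
  ∑ i ∈ Finset.range n, w (ρ i) (ρ (i + 1))

/-- Mean payoff (liminf of averages) of a play. -/
noncomputable def MP (w : Q → Q → ℤ) (ρ : ℕ → Q) : ℝ :=
  liminf (fun n => (EL w ρ n : ℝ) / n) atTop

/-- Parity objective: the minimal priority visited infinitely often is even. -/
def ParitySet (p : Q → ℕ) : Set (ℕ → Q) := {ρ | Even (sInf (p '' infSet ρ))}

def MeanPayoffGe (w : Q → Q → ℤ) (ν : ℝ) : Set (ℕ → Q) := {ρ | ν ≤ MP w ρ}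

def MeanPayoffGt (w : Q → Q → ℤ) (ν : ℝ) : Set (ℕ → Q) := {ρ | ν < MP w ρ}

/-- Energy objective with initial credit `c₀`. -/
def PosEnergy (w : Q → Q → ℤ) (c₀ : ℕ) : Set (ℕ → Q) :=
  {ρ | ∀ n, 0 ≤ (c₀ : ℤ) + EL w ρ n}

/-- Büchi objective: some state of `B` is visited infinitely often. -/
def Buchi (B : Set Q) : Set (ℕ → Q) := {ρ | (infSet ρ ∩ B).Nonempty}

/-- Expected mean-payoff value: supremum over strategies of the expectation of the
mean payoff under the trajectory measure. -/
noncomputable def ValMP [MeasurableSpace Q] (M : MDP Q) (w : Q → Q → ℤ) (q : Q) : ℝ :=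
  sSup {x | ∃ σ : Strategy M, ∃ μ : Measure (ℕ → Q),
    IsTrajMeasure M σ q μ ∧ x = ∫ ρ, MP w ρ ∂μ}


namespace MDP

variable (M : MDP Q) (σ : Strategy M)

lemma step_support_subset (h : List Q) (a : Q) : (M.step σ h a).support ⊆ {b | M.E a b} := by
  intro b hb
  unfold step at hb
  split_ifs at hb with ha
  · exact σ.act_support h a ha b hb
  · exact (M.δ_support a ha b).1 hb

lemma step_eq_zero_of_not_E (h : List Q) {a b : Q} (hab : ¬ M.E a b) : M.step σ h a b = 0 :=
  PMF.apply_eq_zero_iff _ _ |>.2 fun hb => hab (M.step_support_subset σ h a hb)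

lemma step_of_notMem {a : Q} (ha : a ∉ M.Q1) (h : List Q) : M.step σ h a = M.δ a := if_neg ha

end MDP

def cyl (f : ℕ → Q) (n : ℕ) : Set (ℕ → Q) := {ρ | ∀ i ≤ n, ρ i = f i}

noncomputable def stepProb (M : MDP Q) (σ : Strategy M) (f : ℕ → Q) (n : ℕ) : ℝ≥0∞ :=
  M.step σ ((List.range n).map f) (f n) (f (n + 1))

lemma pathProb_range_map (M : MDP Q) (σ : Strategy M) (f : ℕ → Q) (n k : ℕ) :
    pathProb M σ ((List.range k).map f) (f k) ((List.range n).map fun i => f (k + i + 1)) =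
      ∏ i ∈ Finset.range n, stepProb M σ f (k + i) := by
  induction n generalizing k with
  | zero => simp [pathProb]
  | succ n ih =>
    have hist : (List.range k).map f ++ [f k] = (List.range (k + 1)).map f := by
      simp [List.range_succ]
    rw [List.range_succ_eq_map, List.map_cons, List.map_map, pathProb, hist,
      Finset.prod_range_succ', mul_comm]
    simp only [Function.comp_def, Nat.succ_eq_add_one, ← add_assoc, add_right_comm k _ 1,
      ← ih (k + 1)]
    rfl

lemma preimage_image_domRestrict_of_dependsOn {ι α : Type*} {S : Set (ι → α)} {s : Set ι}
    (hS : DependsOn (· ∈ S) s) : s.domRestrict ⁻¹' (s.domRestrict '' S) = S := by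
  refine Set.Subset.antisymm ?_ (Set.subset_preimage_image _ _)
  rintro ρ ⟨ρ', hρ', he⟩
  exact Eq.mp (hS fun i hi => congrFun he ⟨i, hi⟩) hρ'

lemma measurableSet_of_dependsOn {ι α : Type*} [MeasurableSpace α] [Countable α]
    [MeasurableSingletonClass α] {S : Set (ι → α)} {s : Set ι} [Finite s]
    (hS : DependsOn (· ∈ S) s) : MeasurableSet S := by
  rw [← preimage_image_domRestrict_of_dependsOn hS]
  exact Set.measurable_restrict s (Set.to_countable _).measurableSet

lemma measurableSet_eval_eq {ι α : Type*} [MeasurableSpace α] [MeasurableSingletonClass α]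
    (i : ι) (a : α) : MeasurableSet {ρ : ι → α | ρ i = a} :=
  (measurableSet_singleton a).preimage (measurable_pi_apply i)

lemma preimage_restrictLe_singleton (ρ : ℕ → Q) (t : ℕ) :
    Preorder.restrictLe (π := fun _ => Q) t ⁻¹' {Preorder.restrictLe t ρ} = cyl ρ t := by
  ext ρ'
  simp [funext_iff, cyl]

section Measure

variable [MeasurableSpace Q] {M : MDP Q} {σ : Strategy M} {q : Q} {μ : Measure (ℕ → Q)}

lemma IsTrajMeasure.measure_cyl (hμ : IsTrajMeasure M σ q μ) (f : ℕ → Q) (n : ℕ) :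
    μ (cyl f n) = if f 0 = q then ∏ i ∈ Finset.range n, stepProb M σ f i else 0 := by
  rw [cyl, hμ.2 n f]
  split_ifs with hf
  · subst hf
    simpa using pathProb_range_map M σ f n 0
  · rfl

lemma IsTrajMeasure.measure_cyl_succ (hμ : IsTrajMeasure M σ q μ) (f : ℕ → Q) (n : ℕ) :
    μ (cyl f (n + 1)) = μ (cyl f n) * stepProb M σ f n := by
  simp only [hμ.measure_cyl, Finset.prod_range_succ]
  split_ifs <;> simp

lemma IsTrajMeasure.measure_cyl_inter_eval (hμ : IsTrajMeasure M σ q μ) (f : ℕ → Q) (n : ℕ)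
    (x : Q) : μ (cyl f n ∩ {ρ | ρ (n + 1) = x}) =
      μ (cyl f n) * M.step σ ((List.range n).map f) (f n) x := by
  set g := Function.update f (n + 1) x
  have hg : ∀ i ≤ n, g i = f i := fun i hi => Function.update_of_ne (by omega) x f
  have hcyl : cyl f n ∩ {ρ | ρ (n + 1) = x} = cyl g (n + 1) := by
    ext ρ
    simp only [cyl, Set.mem_inter_iff, Set.mem_ofPred_eq, Nat.le_succ_iff_eq_or_le]
    grind
  have hcyl' : cyl g n = cyl f n := by
    ext ρ
    simp only [cyl, Set.mem_ofPred_eq]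
    grind
  rw [hcyl, hμ.measure_cyl_succ, hcyl', stepProb, show g (n + 1) = x from Function.update_self ..,
    List.map_congr_left fun i hi => hg i (by grind), hg n le_rfl]

variable [Countable Q] [MeasurableSingletonClass Q]

lemma IsTrajMeasure.measure_inter_eval_succ (hμ : IsTrajMeasure M σ q μ) {S : Set (ℕ → Q)}
    {t : ℕ} (hS : DependsOn (· ∈ S) (Set.Iic t)) {x : Q} {c : ℝ≥0∞}
    (hc : ∀ ρ ∈ S, M.step σ ((List.range t).map ρ) (ρ t) x = c) :
    μ (S ∩ {ρ | ρ (t + 1) = x}) = c * μ S := by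
  set π := Preorder.restrictLe (π := fun _ : ℕ => Q) t
  have hS' : π ⁻¹' (π '' S) = S := preimage_image_domRestrict_of_dependsOn hS
  have hcount : (π '' S).Countable := Set.to_countable _
  have hfiber : ∀ v ∈ π '' S, MeasurableSet (π ⁻¹' {v}) :=
    fun v _ => Preorder.measurable_restrictLe t (measurableSet_singleton v)
  have hnext := measurableSet_eval_eq (t + 1) x
  have key : ∀ v ∈ π '' S, μ (π ⁻¹' {v} ∩ {ρ | ρ (t + 1) = x}) = c * μ (π ⁻¹' {v}) := by
    rintro _ ⟨ρ, hρ, rfl⟩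
    rw [preimage_restrictLe_singleton, hμ.measure_cyl_inter_eval, hc ρ hρ, mul_comm]
  calc μ (S ∩ {ρ | ρ (t + 1) = x})
      = μ.restrict {ρ | ρ (t + 1) = x} (π ⁻¹' (π '' S)) := by
        rw [Measure.restrict_apply' hnext, hS']
    _ = ∑' v : π '' S, μ.restrict {ρ | ρ (t + 1) = x} (π ⁻¹' {↑v}) :=
        (tsum_measure_preimage_singleton hcount hfiber).symm
    _ = ∑' v : π '' S, c * μ (π ⁻¹' {↑v}) := by
        congr 1 with ⟨v, hv⟩
        rw [Measure.restrict_apply' hnext, key v hv]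
    _ = c * μ S := by
        rw [ENNReal.tsum_mul_left, tsum_measure_preimage_singleton hcount hfiber, hS']

lemma IsTrajMeasure.ae_E (hμ : IsTrajMeasure M σ q μ) (n : ℕ) :
    ∀ᵐ ρ ∂μ, M.E (ρ n) (ρ (n + 1)) := by
  have h_pair : ∀ a b, ∀ᵐ ρ ∂μ, ρ n = a → ρ (n + 1) = b → M.E a b := by
    intro a b
    by_cases hab : M.E a b
    · exact ae_of_all _ fun _ _ _ => hab
    have hS : DependsOn (· ∈ {ρ : ℕ → Q | ρ n = a}) (Set.Iic n) := fun ρ ρ' h => by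
      simp only [Set.mem_ofPred_eq, h n (Set.mem_Iic.2 le_rfl)]
    have hnull := hμ.measure_inter_eval_succ hS (x := b)
      fun ρ (hρ : ρ n = a) => hρ ▸ M.step_eq_zero_of_not_E σ _ hab
    rw [zero_mul] at hnull
    refine measure_mono_null (fun ρ hρ => ?_) hnull
    by_contra h
    exact hρ fun h1 h2 => (h ⟨h1, h2⟩).elim
  filter_upwards [ae_all_iff.2 fun a => ae_all_iff.2 (h_pair a)] with ρ hρ using hρ _ _ rfl rfl

lemma IsTrajMeasure.measure_inter_eval_succ_ne (hμ : IsTrajMeasure M σ q μ) {S : Set (ℕ → Q)}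
    {t : ℕ} (hS : DependsOn (· ∈ S) (Set.Iic t)) {a : Q} (ha : a ∉ M.Q1)
    (hSa : ∀ ρ ∈ S, ρ t = a) (b : Q) :
    μ (S ∩ {ρ | ρ (t + 1) ≠ b}) = (1 - M.δ a b) * μ S := by
  have := hμ.1
  have h_eq : μ (S ∩ {ρ | ρ (t + 1) = b}) = M.δ a b * μ S :=
    hμ.measure_inter_eval_succ hS fun ρ hρ => by rw [hSa ρ hρ, M.step_of_notMem σ ha]
  have h_split := measure_inter_add_sdiff (μ := μ) S (measurableSet_eval_eq (t + 1) b)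
  rw [h_eq] at h_split
  have hfin : M.δ a b * μ S ≠ ∞ :=
    ENNReal.mul_ne_top (PMF.apply_ne_top _ _) (measure_ne_top _ _)
  rw [ENNReal.sub_mul fun _ _ => measure_ne_top _ _, one_mul]
  exact ENNReal.eq_sub_of_add_eq hfin ((add_comm _ _).trans h_split)

end Measure

lemma exists_lt_count_eq_of_lt_count {p : ℕ → Prop} [DecidablePred p] {k T : ℕ}
    (h : k < Nat.count p T) : ∃ t < T, p t ∧ Nat.count p t = k := by
  induction T with
  | zero => simp at h
  | succ T ih =>
    by_cases hlt : k < Nat.count p T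
    · obtain ⟨t, ht, hpt, hcount⟩ := ih hlt
      exact ⟨t, by omega, hpt, hcount⟩
    · have hle : Nat.count p (T + 1) ≤ Nat.count p T + 1 := by
        rw [Nat.count_succ]
        split_ifs <;> omega
      exact ⟨T, T.lt_succ_self, Nat.count_lt_count_succ_iff.1 (by omega), by omega⟩

lemma count_congr_of_lt {p p' : ℕ → Prop} [DecidablePred p] [DecidablePred p'] {t : ℕ}
    (h : ∀ n < t, p n ↔ p' n) : Nat.count p t = Nat.count p' t := by
  simp only [Nat.count_eq_card_filter_range]
  exact congrArg _ (Finset.filter_congr fun n hn => h n (Finset.mem_range.1 hn))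

/-- Visits to `a` are counted from time `m` on, starting at `0`: `t` is the time of visit
number `k`, and no earlier counted visit is followed by `b`. -/
def unfollowedVisit (a b : Q) (m k t : ℕ) : Set (ℕ → Q) :=
  {ρ | (m ≤ t ∧ ρ t = a) ∧ Nat.count (fun n => m ≤ n ∧ ρ n = a) t = k ∧
    ∀ n < t, m ≤ n → ρ n = a → ρ (n + 1) ≠ b}

section UnfollowedVisit

variable (a b : Q) (m : ℕ)

lemma dependsOn_unfollowedVisit (k t : ℕ) :
    DependsOn (· ∈ unfollowedVisit a b m k t) (Set.Iic t) := by
  intro ρ ρ' h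
  have h' : ∀ n < t + 1, ρ n = ρ' n := fun n hn => h n (Set.mem_Iic.2 (by omega))
  have hcount : Nat.count (fun n => m ≤ n ∧ ρ n = a) t = Nat.count (fun n => m ≤ n ∧ ρ' n = a) t :=
    count_congr_of_lt fun n hn => by rw [h' n (by omega)]
  simp only [unfollowedVisit, Set.mem_ofPred_eq, hcount]
  grind

lemma pairwise_disjoint_unfollowedVisit (k : ℕ) :
    Pairwise (Function.onFun Disjoint (unfollowedVisit a b m k)) := by
  intro t t' hne
  refine Set.disjoint_left.2 fun ρ ⟨hvisit, hcount, _⟩ ⟨hvisit', hcount', _⟩ => hne ?_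
  exact Nat.count_injective hvisit hvisit' (hcount.trans hcount'.symm)

lemma unfollowedVisit_succ_subset (k t' : ℕ) :
    unfollowedVisit a b m (k + 1) t' ⊆ ⋃ t, unfollowedVisit a b m k t ∩ {ρ | ρ (t + 1) ≠ b} := by
  rintro ρ ⟨-, hcount, hunfollowed⟩
  obtain ⟨t, ht, hvisit, hcount_t⟩ := exists_lt_count_eq_of_lt_count
    (p := fun n => m ≤ n ∧ ρ n = a) (k := k) (T := t') (by omega)
  exact Set.mem_iUnion.2 ⟨t, ⟨hvisit, hcount_t, fun n hn => hunfollowed n (hn.trans ht)⟩,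
    hunfollowed t ht hvisit.1 hvisit.2⟩

end UnfollowedVisit

lemma mem_infSet_iff {ρ : ℕ → Q} {s : Q} : s ∈ infSet ρ ↔ ∃ᶠ n in atTop, ρ n = s :=
  frequently_atTop.symm

section Recurrence

variable [MeasurableSpace Q] [Countable Q] [MeasurableSingletonClass Q] {M : MDP Q}
  {σ : Strategy M} {q : Q} {μ : Measure (ℕ → Q)}

lemma IsTrajMeasure.measure_iUnion_unfollowedVisit_le (hμ : IsTrajMeasure M σ q μ) {a : Q}
    (ha : a ∉ M.Q1) (b : Q) (m k : ℕ) :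
    μ (⋃ t, unfollowedVisit a b m k t) ≤ (1 - M.δ a b) ^ k := by
  induction k with
  | zero =>
    have := hμ.1
    simpa using prob_le_one
  | succ k ih =>
    have hmeas : ∀ t, MeasurableSet (unfollowedVisit a b m k t) :=
      fun t => measurableSet_of_dependsOn (dependsOn_unfollowedVisit a b m k t)
    calc μ (⋃ t, unfollowedVisit a b m (k + 1) t)
        ≤ μ (⋃ t, unfollowedVisit a b m k t ∩ {ρ | ρ (t + 1) ≠ b}) :=
          measure_mono (Set.iUnion_subset (unfollowedVisit_succ_subset a b m k))
      _ ≤ ∑' t, μ (unfollowedVisit a b m k t ∩ {ρ | ρ (t + 1) ≠ b}) := measure_iUnion_le _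
      _ = ∑' t, (1 - M.δ a b) * μ (unfollowedVisit a b m k t) := by
          congr 1 with t
          exact hμ.measure_inter_eval_succ_ne (dependsOn_unfollowedVisit a b m k t) ha
            (fun ρ hρ => hρ.1.2) b
      _ = (1 - M.δ a b) * μ (⋃ t, unfollowedVisit a b m k t) := by
          rw [ENNReal.tsum_mul_left,
            measure_iUnion (pairwise_disjoint_unfollowedVisit a b m k) hmeas]
      _ ≤ (1 - M.δ a b) ^ (k + 1) := by
          rw [pow_succ']
          gcongr

lemma IsTrajMeasure.measure_frequently_unfollowed (hμ : IsTrajMeasure M σ q μ) {a b : Q}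
    (ha : a ∉ M.Q1) (hab : M.δ a b ≠ 0) (m : ℕ) :
    μ {ρ | (∃ᶠ n in atTop, ρ n = a) ∧ ∀ n ≥ m, ρ n = a → ρ (n + 1) ≠ b} = 0 := by
  have hsub : ∀ k, {ρ | (∃ᶠ n in atTop, ρ n = a) ∧ ∀ n ≥ m, ρ n = a → ρ (n + 1) ≠ b} ⊆
      ⋃ t, unfollowedVisit a b m k t := by
    rintro k ρ ⟨hfreq, hunfollowed⟩
    have hinf : {n | m ≤ n ∧ ρ n = a}.Infinite :=
      Nat.frequently_atTop_iff_infinite.1 ((eventually_ge_atTop m).and_frequently hfreq)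
    exact Set.mem_iUnion.2 ⟨Nat.nth _ k, Nat.nth_mem_of_infinite hinf k,
      Nat.count_nth_of_infinite hinf k, fun n _ hn => hunfollowed n hn⟩
  have hlt : 1 - M.δ a b < 1 := ENNReal.sub_lt_self ENNReal.one_ne_top one_ne_zero hab
  refine le_antisymm (ge_of_tendsto' (ENNReal.tendsto_pow_atTop_nhds_zero_of_lt_one hlt)
    fun k => (measure_mono (hsub k)).trans (hμ.measure_iUnion_unfollowedVisit_le ha b m k)) bot_le

lemma IsTrajMeasure.ae_mem_infSet_of_mem_infSet (hμ : IsTrajMeasure M σ q μ) {a b : Q}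
    (ha : a ∉ M.Q1) (hab : M.δ a b ≠ 0) : ∀ᵐ ρ ∂μ, a ∈ infSet ρ → b ∈ infSet ρ := by
  refine ae_iff.2 (measure_mono_null (fun ρ hρ => ?_)
    (measure_iUnion_null (hμ.measure_frequently_unfollowed ha hab)))
  simp only [Set.mem_ofPred_eq, Classical.not_imp, mem_infSet_iff, not_frequently] at hρ
  obtain ⟨m, hm⟩ := eventually_atTop.1 hρ.2
  exact Set.mem_iUnion.2 ⟨m, hρ.1, fun n hn _ => hm (n + 1) (by omega)⟩

lemma IsTrajMeasure.ae_support_subset_infSet (hμ : IsTrajMeasure M σ q μ) :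
    ∀ᵐ ρ ∂μ, ∀ a ∈ infSet ρ, a ∉ M.Q1 → (M.δ a).support ⊆ infSet ρ := by
  have h_pair : ∀ a b, ∀ᵐ ρ ∂μ, a ∈ infSet ρ → a ∉ M.Q1 → b ∈ (M.δ a).support → b ∈ infSet ρ := by
    intro a b
    by_cases hab : a ∉ M.Q1 ∧ M.δ a b ≠ 0
    · filter_upwards [hμ.ae_mem_infSet_of_mem_infSet hab.1 hab.2] with ρ hρ ha _ _ using hρ ha
    · exact ae_of_all _ fun _ _ ha hb => (hab ⟨ha, (M.δ a).mem_support_iff b |>.1 hb⟩).elim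
  filter_upwards [ae_all_iff.2 fun a => ae_all_iff.2 (h_pair a)] with ρ hρ a ha haQ b hb
  exact hρ a b ha haQ hb

end Recurrence

lemma eventually_mem_infSet [Finite Q] (ρ : ℕ → Q) : ∀ᶠ n in atTop, ρ n ∈ infSet ρ := by
  have h : ∀ s, ∀ᶠ n in atTop, s ∉ infSet ρ → ρ n ≠ s := by
    intro s
    by_cases hs : s ∈ infSet ρ
    · exact Eventually.of_forall fun _ h => (h hs).elim
    · rw [mem_infSet_iff, not_frequently] at hs
      exact hs.mono fun _ hn _ => hn
  filter_upwards [eventually_all.2 h] with n hn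
  by_contra hmem
  exact hn (ρ n) hmem rfl

lemma isEndComponent_infSet [Finite Q] {M : MDP Q} {ρ : ℕ → Q}
    (hE : ∀ n, M.E (ρ n) (ρ (n + 1)))
    (hclosed : ∀ a ∈ infSet ρ, a ∉ M.Q1 → (M.δ a).support ⊆ infSet ρ) :
    M.IsEndComponent (infSet ρ) := by
  obtain ⟨N, hN⟩ := eventually_atTop.1 (eventually_mem_infSet ρ)
  have hpath : ∀ n ≥ N, ∀ n' ≥ n, Relation.ReflTransGen
      (fun a b => a ∈ infSet ρ ∧ b ∈ infSet ρ ∧ M.E a b) (ρ n) (ρ n') := by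
    intro n hn n' hn'
    induction n', hn' using Nat.le_induction with
    | base => exact .refl
    | succ n' hn' ih => exact ih.tail ⟨hN n' (by omega), hN (n' + 1) (by omega), hE n'⟩
  refine ⟨⟨ρ N, hN N le_rfl⟩, hclosed, fun a ha => ?_, fun a ha b hb => ?_⟩
  · obtain ⟨n, hn, rfl⟩ := ha N
    exact ⟨ρ (n + 1), hN (n + 1) (by omega), hE n⟩
  · obtain ⟨n, hn, rfl⟩ := ha N
    obtain ⟨n', hn', rfl⟩ := hb n
    exact hpath n hn n' hn'

theorem end_component_lemma [Fintype Q]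
    [MeasurableSpace Q] [MeasurableSingletonClass Q]
    (M : MDP Q) (q : Q) (σ : Strategy M) (μ : Measure (ℕ → Q))
    (hμ : IsTrajMeasure M σ q μ) :
    μ {ρ | M.IsEndComponent (infSet ρ)} = 1 := by
  have := hμ.1
  have h_ae : ∀ᵐ ρ ∂μ, M.IsEndComponent (infSet ρ) := by
    filter_upwards [ae_all_iff.2 hμ.ae_E, hμ.ae_support_subset_infSet] with ρ hE hclosed
    exact isEndComponent_infSet hE hclosed
  exact (measure_congr (ae_eq_univ.2 h_ae)).trans measure_univ

end MPP
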